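/- Every locally finite variety of algebras over an algebraic first-order language L has the conservative model extension property. -/

import Mathlib

namespace Paper

open FirstOrder FirstOrder.Language FirstOrder.Language.Structure

universe u

/-- A bundled algebra: an `L`-structure with carrier in `Type u`. -/
structure Alg (L : FirstOrder.Language.{u, u}) : Type (u + 1) where
  carrier : Type u
  [str : L.Structure carrier]

attribute [instance] Alg.str

variable {L : FirstOrder.Language.{u, u}}

/-- The direct product of a family of `L`-structures. -/
instance piStructure {ι : Type u} (M : ι → Type u) [∀ i, L.Structure (M i)] :
    L.Structure (∀ i, M i) where
  funMap f x i := funMap f fun j => x j i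
  RelMap r x := ∀ i, RelMap r fun j => x j i

/-- An equation `s ≈ t` holds in `M` under the assignment `v`. -/
def EqHolds {α : Type} {M : Type u} [L.Structure M]
    (ε : L.Term α × L.Term α) (v : α → M) : Prop :=
  ε.1.realize v = ε.2.realize v

/-- A (finite) conjunction of equations holds under the assignment `v`. -/
def ConjHolds {α : Type} {M : Type u} [L.Structure M]
    (c : List (L.Term α × L.Term α)) (v : α → M) : Prop :=
  ∀ ε ∈ c, EqHolds ε v

/-- A (finite) conjunction of negated equations holds under the assignment `v`. -/
def NegConjHolds {α : Type} {M : Type u} [L.Structure M]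
    (c : List (L.Term α × L.Term α)) (v : α → M) : Prop :=
  ∀ ε ∈ c, ¬ EqHolds ε v

/-- The first-order theory of a class of algebras. -/
def theoryOf (K : Set (Alg L)) : L.Theory :=
  {φ | ∀ A ∈ K, A.carrier ⊨ φ}

/-- A sentence is universal if it is the universal closure of a quantifier-free formula. -/
def IsUniversalSentence (φ : L.Sentence) : Prop :=
  ∃ (n : ℕ) (ψ : L.BoundedFormula Empty n), ψ.IsQF ∧ φ = ψ.alls

/-- Semantic entailment of a sentence from a theory. -/
def Entails (T : L.Theory) (φ : L.Sentence) : Prop :=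
  ∀ (M : Type u) [L.Structure M] [Nonempty M], M ⊨ T → M ⊨ φ

/-- Two theories are co-theories when they entail the same universal sentences. -/
def AreCotheories (T T' : L.Theory) : Prop :=
  ∀ φ : L.Sentence, IsUniversalSentence φ → (Entails T φ ↔ Entails T' φ)

/-- A theory is model complete when every embedding between its models is elementary. -/
def IsModelComplete (T : L.Theory) : Prop :=
  ∀ (M N : Type u) [L.Structure M] [L.Structure N] [Nonempty M] [Nonempty N],
    M ⊨ T → N ⊨ T → ∀ (f : M ↪[L] N) (n : ℕ) (φ : L.Formula (Fin n)) (v : Fin n → M),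
      φ.Realize (f ∘ v) ↔ φ.Realize v

/-- `T'` is a model companion of `T`. -/
def IsModelCompanion (T T' : L.Theory) : Prop :=
  IsModelComplete T' ∧ AreCotheories T T'

/-- The (quantifier-free) diagram of a structure: all quantifier-free sentences with
parameters from `M` that hold in `M`. -/
def diagram (L : FirstOrder.Language.{u, u}) (M : Type u) [L.Structure M] :
    (L[[M]]).Theory :=
  {φ | BoundedFormula.IsQF φ ∧ M ⊨ φ}

/-- `T'` is a model completion of `T`: a model companion such that, for every model `M` of `T`,
`T'` together with the diagram of `M` is complete. -/
def IsModelCompletion (T T' : L.Theory) : Prop :=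
  IsModelCompanion T T' ∧
    ∀ (M : Type u) [L.Structure M] [Nonempty M], M ⊨ T →
      Theory.IsComplete ((L.lhomWithConstants M).onTheory T' ∪ diagram L M)

/-- The theory of the class `K` has a model completion. -/
def HasModelCompletion (K : Set (Alg L)) : Prop :=
  ∃ T' : L.Theory, IsModelCompletion (theoryOf K) T'

/-- `K` is a universal class: it is closed under isomorphisms, substructures and ultraproducts. -/
def IsUniversalClass (K : Set (Alg L)) : Prop :=
  (∀ A ∈ K, ∀ (N : Type u) [L.Structure N], Nonempty (A.carrier ≃[L] N) → Alg.mk N ∈ K) ∧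
  (∀ A ∈ K, ∀ S : L.Substructure A.carrier, Alg.mk (↥S) ∈ K) ∧
  (∀ (ι : Type u) (F : Ultrafilter ι) (M : ι → Type u) [∀ i, L.Structure (M i)],
      (∀ i, Alg.mk (M i) ∈ K) → Alg.mk ((F : Filter ι).Product M) ∈ K)

/-- `K` is a variety: it is closed under homomorphic images, substructures and products. -/
def IsVariety (K : Set (Alg L)) : Prop :=
  (∀ A ∈ K, ∀ (N : Type u) [L.Structure N] (f : A.carrier →[L] N),
      Function.Surjective ⇑f → Alg.mk N ∈ K) ∧
  (∀ A ∈ K, ∀ S : L.Substructure A.carrier, Alg.mk (↥S) ∈ K) ∧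
  (∀ (ι : Type u) (M : ι → Type u) [∀ i, L.Structure (M i)],
      (∀ i, Alg.mk (M i) ∈ K) → Alg.mk (∀ i, M i) ∈ K)

/-- The amalgamation property. -/
def Amalgamation (K : Set (Alg L)) : Prop :=
  ∀ A ∈ K, ∀ B ∈ K, ∀ C ∈ K,
    ∀ (f : A.carrier ↪[L] B.carrier) (g : A.carrier ↪[L] C.carrier),
      ∃ D ∈ K, ∃ (h : B.carrier ↪[L] D.carrier) (k : C.carrier ↪[L] D.carrier),
        ∀ a : A.carrier, h (f a) = k (g a)

/-- The variable projection property. -/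
def VarProj (K : Set (Alg L)) : Prop :=
  ∀ (n : ℕ) (φ : List (L.Term (Fin n ⊕ Unit) × L.Term (Fin n ⊕ Unit))),
    ∃ ξ : L.Formula (Fin n), ξ.IsQF ∧
      (∀ A ∈ K, ∀ v : Fin n ⊕ Unit → A.carrier, ConjHolds φ v → ξ.Realize (v ∘ Sum.inl)) ∧
      (∀ ε : L.Term (Fin n) × L.Term (Fin n),
        (∀ A ∈ K, ∀ v : Fin n ⊕ Unit → A.carrier, ConjHolds φ v → EqHolds ε (v ∘ Sum.inl)) →
        (∀ A ∈ K, ∀ v : Fin n → A.carrier, ξ.Realize v → EqHolds ε v))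

/-- The equational variable projection property. -/
def EqVarProj (K : Set (Alg L)) : Prop :=
  ∀ (n : ℕ) (φ : List (L.Term (Fin n ⊕ Unit) × L.Term (Fin n ⊕ Unit))),
    ∃ ξ : List (L.Term (Fin n) × L.Term (Fin n)),
      (∀ A ∈ K, ∀ v : Fin n ⊕ Unit → A.carrier, ConjHolds φ v → ConjHolds ξ (v ∘ Sum.inl)) ∧
      (∀ ε : L.Term (Fin n) × L.Term (Fin n),
        (∀ A ∈ K, ∀ v : Fin n ⊕ Unit → A.carrier, ConjHolds φ v → EqHolds ε (v ∘ Sum.inl)) →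
        (∀ A ∈ K, ∀ v : Fin n → A.carrier, ConjHolds ξ v → EqHolds ε v))

/-- The conservative model extension property. -/
def ConsModelExt (K : Set (Alg L)) : Prop :=
  ∀ (n : ℕ) (pos neg : List (L.Term (Fin n ⊕ Unit) × L.Term (Fin n ⊕ Unit))),
    ∃ χ : L.Formula (Fin n), χ.IsQF ∧
      (∀ A ∈ K, ∀ v : Fin n ⊕ Unit → A.carrier,
        ConjHolds pos v → NegConjHolds neg v → χ.Realize (v ∘ Sum.inl)) ∧
      (∀ A ∈ K, ∀ a : Fin n → A.carrier,
        Substructure.closure L (Set.range a) = ⊤ →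
        χ.Realize a →
        (∀ ε : L.Term (Fin n) × L.Term (Fin n),
          (∀ B ∈ K, ∀ v : Fin n ⊕ Unit → B.carrier,
            ConjHolds pos v → EqHolds ε (v ∘ Sum.inl)) →
          EqHolds ε a) →
        ∃ B ∈ K, ∃ (g : A.carrier ↪[L] B.carrier) (b : B.carrier),
          ConjHolds pos (Sum.elim (⇑g ∘ a) fun _ => b) ∧
          NegConjHolds neg (Sum.elim (⇑g ∘ a) fun _ => b))

/-- The strengthened extension property of Proposition 3.8 (tuples of new variables, and no
conservativity conditions). -/
def StrongModelExt (K : Set (Alg L)) : Prop :=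
  ∀ (n m : ℕ) (pos neg : List (L.Term (Fin n ⊕ Fin m) × L.Term (Fin n ⊕ Fin m))),
    ∃ χ : L.Formula (Fin n), χ.IsQF ∧
      (∀ A ∈ K, ∀ v : Fin n ⊕ Fin m → A.carrier,
        ConjHolds pos v → NegConjHolds neg v → χ.Realize (v ∘ Sum.inl)) ∧
      (∀ A ∈ K, ∀ a : Fin n → A.carrier, χ.Realize a →
        ∃ B ∈ K, ∃ (g : A.carrier ↪[L] B.carrier) (b : Fin m → B.carrier),
          ConjHolds pos (Sum.elim (⇑g ∘ a) b) ∧ NegConjHolds neg (Sum.elim (⇑g ∘ a) b))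

/-- The equational variable restriction property. `π` is either `⊥` (encoded by `none`) or a
conjunction of equations. -/
def OptConjHolds {α : Type} {M : Type u} [L.Structure M] :
    Option (List (L.Term α × L.Term α)) → (α → M) → Prop
  | none => fun _ => False
  | some c => fun v => ConjHolds c v

def EqVarRestrict (K : Set (Alg L)) : Prop :=
  ∀ (n : ℕ) (γ : List (L.Term (Fin n ⊕ Unit) × L.Term (Fin n ⊕ Unit))),
    ∃ π : Option (List (L.Term (Fin n) × L.Term (Fin n))),
      (∀ A ∈ K, ∀ v : Fin n ⊕ Unit → A.carrier, OptConjHolds π (v ∘ Sum.inl) → ConjHolds γ v) ∧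
      (∀ φ : List (L.Term (Fin n) × L.Term (Fin n)),
        (∀ A ∈ K, ∀ v : Fin n ⊕ Unit → A.carrier, ConjHolds φ (v ∘ Sum.inl) → ConjHolds γ v) →
        (∀ A ∈ K, ∀ v : Fin n → A.carrier, ConjHolds φ v → OptConjHolds π v))

/-- A locally finite class of algebras. -/
def LocallyFinite (K : Set (Alg L)) : Prop :=
  ∀ A ∈ K, ∀ S : L.Substructure A.carrier, S.FG → Finite ↥S

/-- A congruence of an `L`-structure. -/
structure Congruence (L : FirstOrder.Language.{u, u}) (M : Type u) [L.Structure M] :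
    Type u where
  rel : M → M → Prop
  refl : ∀ a, rel a a
  symm : ∀ a b, rel a b → rel b a
  trans : ∀ a b c, rel a b → rel b c → rel a c
  compat : ∀ (n : ℕ) (f : L.Functions n) (x y : Fin n → M),
    (∀ i, rel (x i) (y i)) → rel (funMap f x) (funMap f y)

/-- The congruence generated by a set of pairs. -/
def congGen (L : FirstOrder.Language.{u, u}) (M : Type u) [L.Structure M]
    (s : Set (M × M)) : Congruence L M where
  rel a b := ∀ θ : Congruence L M, (∀ p ∈ s, θ.rel p.1 p.2) → θ.rel a b
  refl a θ _ := θ.refl a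
  symm a b h θ hs := θ.symm a b (h θ hs)
  trans a b c h₁ h₂ θ hs := θ.trans a b c (h₁ θ hs) (h₂ θ hs)
  compat n f x y h θ hs := θ.compat n f x y fun i => h i θ hs

/-- The principal congruence generated by a pair. -/
def principalCong (L : FirstOrder.Language.{u, u}) (M : Type u) [L.Structure M]
    (b₁ b₂ : M) : Congruence L M :=
  congGen L M {(b₁, b₂)}

/-- A compact (finitely generated) congruence. -/
def Congruence.IsCompact {M : Type u} [L.Structure M] (θ : Congruence L M) : Prop :=
  ∃ s : Set (M × M), s.Finite ∧ ∀ a b, θ.rel a b ↔ (congGen L M s).rel a b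

/-- The meet of two congruences. -/
def infCong {M : Type u} [L.Structure M] (θ₁ θ₂ : Congruence L M) : Congruence L M where
  rel a b := θ₁.rel a b ∧ θ₂.rel a b
  refl a := ⟨θ₁.refl a, θ₂.refl a⟩
  symm a b h := ⟨θ₁.symm a b h.1, θ₂.symm a b h.2⟩
  trans a b c h₁ h₂ := ⟨θ₁.trans a b c h₁.1 h₂.1, θ₂.trans a b c h₁.2 h₂.2⟩
  compat n f x y h :=
    ⟨θ₁.compat n f x y fun i => (h i).1, θ₂.compat n f x y fun i => (h i).2⟩

/-- The join of two congruences. -/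
def supCong {M : Type u} [L.Structure M] (θ₁ θ₂ : Congruence L M) : Congruence L M :=
  congGen L M {p : M × M | θ₁.rel p.1 p.2 ∨ θ₂.rel p.1 p.2}

/-- The compact intersection property. -/
def HasCIP (K : Set (Alg L)) : Prop :=
  ∀ A ∈ K, ∀ θ₁ θ₂ : Congruence L A.carrier,
    θ₁.IsCompact → θ₂.IsCompact → (infCong θ₁ θ₂).IsCompact

/-- Congruence distributivity of a class. -/
def CongDistributive (K : Set (Alg L)) : Prop :=
  ∀ A ∈ K, ∀ θ₁ θ₂ θ₃ : Congruence L A.carrier, ∀ a b : A.carrier,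
    (infCong θ₁ (supCong θ₂ θ₃)).rel a b ↔ (supCong (infCong θ₁ θ₂) (infCong θ₁ θ₃)).rel a b

/-- The congruence extension property. -/
def CongExtension (K : Set (Alg L)) : Prop :=
  ∀ A ∈ K, ∀ (S : L.Substructure A.carrier) (θ : Congruence L ↥S),
    ∃ θ' : Congruence L A.carrier, ∀ a b : ↥S, θ'.rel ↑a ↑b ↔ θ.rel a b

/-- Equationally definable principal congruences. -/
def EDPC (K : Set (Alg L)) : Prop :=
  ∃ φ : List (L.Term (Fin 4) × L.Term (Fin 4)),
    ∀ A ∈ K, ∀ a₁ a₂ b₁ b₂ : A.carrier,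
      (principalCong L A.carrier b₁ b₂).rel a₁ a₂ ↔ ConjHolds φ ![a₁, a₂, b₁, b₂]

/-- Quantifier-free definable principal congruences. -/
def QFDPC (K : Set (Alg L)) : Prop :=
  ∃ α : L.Formula (Fin 4), α.IsQF ∧
    ∀ A ∈ K, ∀ a₁ a₂ b₁ b₂ : A.carrier,
      (principalCong L A.carrier b₁ b₂).rel a₁ a₂ ↔ α.Realize ![a₁, a₂, b₁, b₂]

/-- Parametrically definable principal congruences. -/
def PDPC (K : Set (Alg L)) : Prop :=
  ∃ (m : ℕ) (ξ : L.Formula (Fin 4 ⊕ Fin m)), ξ.IsQF ∧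
    ∀ A ∈ K, ∀ a₁ a₂ b₁ b₂ : A.carrier,
      (principalCong L A.carrier b₁ b₂).rel a₁ a₂ ↔
        ∀ B ∈ K, ∀ g : A.carrier ↪[L] B.carrier, ∀ w : Fin m → B.carrier,
          ξ.Realize (Sum.elim (fun i : Fin 4 => g (![a₁, a₂, b₁, b₂] i)) w)

/-- The pair `(γ, φ)` witnesses a guarded deduction theorem for `K`. -/
def GuardedDTWitness (K : Set (Alg L)) (m : ℕ)
    (γ φ : List (L.Term (Fin 4 ⊕ Fin m) × L.Term (Fin 4 ⊕ Fin m))) : Prop :=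
  ∀ (p : ℕ) (s₁ s₂ t₁ t₂ : L.Term (Fin p)) (π : List (L.Term (Fin p) × L.Term (Fin p))),
    ((∀ A ∈ K, ∀ v : Fin p → A.carrier,
        ConjHolds π v → t₁.realize v = t₂.realize v → s₁.realize v = s₂.realize v) ↔
      (∀ A ∈ K, ∀ v : Fin p → A.carrier, ConjHolds π v →
        ∀ w : Fin m → A.carrier,
          ConjHolds γ (Sum.elim ![s₁.realize v, s₂.realize v, t₁.realize v, t₂.realize v] w) →
          ConjHolds φ (Sum.elim ![s₁.realize v, s₂.realize v, t₁.realize v, t₂.realize v] w))) ∧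
    (∀ σ : L.Term (Fin p) × L.Term (Fin p),
      ((∀ A ∈ K, ∀ v : Fin p → A.carrier, ∀ w : Fin m → A.carrier,
          ConjHolds π v →
          ConjHolds γ (Sum.elim ![s₁.realize v, s₂.realize v, t₁.realize v, t₂.realize v] w) →
          EqHolds σ v) ↔
        (∀ A ∈ K, ∀ v : Fin p → A.carrier, ConjHolds π v → EqHolds σ v)))

/-- `K` has a guarded deduction theorem. -/
def GuardedDT (K : Set (Alg L)) : Prop :=
  ∃ (m : ℕ) (γ φ : List (L.Term (Fin 4 ⊕ Fin m) × L.Term (Fin 4 ⊕ Fin m))),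
    GuardedDTWitness K m γ φ

/-- The term algebra. -/
instance termStructure (α : Type) : L.Structure (L.Term α) where
  funMap f x := Term.func f x
  RelMap _ _ := False

/-- The congruence of the term algebra consisting of the identities of the class `K`. -/
def varietyCong (K : Set (Alg L)) (α : Type) : Congruence L (L.Term α) where
  rel s t := ∀ A ∈ K, ∀ v : α → A.carrier, s.realize v = t.realize v
  refl _ _ _ _ := rfl
  symm _ _ h A hA v := (h A hA v).symm
  trans _ _ _ h₁ h₂ A hA v := (h₁ A hA v).trans (h₂ A hA v)
  compat n f x y h A hA v := by
    show Term.realize v (Term.func f x) = Term.realize v (Term.func f y)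
    simp only [Term.realize]
    exact congrArg (funMap f) (funext fun i => h i A hA v)

/-- The setoid underlying a congruence. -/
def Congruence.setoid {M : Type u} [L.Structure M] (θ : Congruence L M) : Setoid M :=
  ⟨θ.rel, ⟨θ.refl, fun h => θ.symm _ _ h, fun h h' => θ.trans _ _ _ h h'⟩⟩

/-- The quotient of an algebra by a congruence. -/
abbrev QuotAlg {M : Type u} [L.Structure M] (θ : Congruence L M) : Type u :=
  Quotient θ.setoid

noncomputable instance quotAlgStructure {M : Type u} [L.Structure M] (θ : Congruence L M) :
    L.Structure (QuotAlg θ) where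
  funMap f x := Quotient.mk θ.setoid (funMap f fun i => (x i).out)
  RelMap _ _ := False

/-- The free algebra of the class `K` over the variables `α`. -/
abbrev FreeAlg (K : Set (Alg L)) (α : Type) : Type u :=
  QuotAlg (varietyCong K α)

/-- `A` is finitely presented relative to the class `K`: it is isomorphic to a quotient of a
finitely generated `K`-free algebra by a compact congruence. -/
def IsFinitelyPresentedIn (K : Set (Alg L)) (A : Type u) [L.Structure A] : Prop :=
  ∃ (n : ℕ) (s : Set (FreeAlg K (Fin n) × FreeAlg K (Fin n))), s.Finite ∧
    Nonempty (A ≃[L] QuotAlg (congGen L (FreeAlg K (Fin n)) s))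

/-- Coherence: every finitely generated subalgebra of a finitely presented member of `K` is
finitely presented. -/
def Coherent (K : Set (Alg L)) : Prop :=
  ∀ A ∈ K, IsFinitelyPresentedIn K A.carrier →
    ∀ S : L.Substructure A.carrier, S.FG → IsFinitelyPresentedIn K ↥S


/-- conj of list of formulas -/
def listConj {α : Type} (l : List (L.Formula α)) : L.Formula α :=
  l.foldr (· ⊓ ·) ⊤

def listDisj {α : Type} (l : List (L.Formula α)) : L.Formula α :=
  l.foldr (· ⊔ ·) ⊥

lemma listConj_isQF {α : Type} (l : List (L.Formula α)) (h : ∀ φ ∈ l, φ.IsQF) :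
    (listConj l).IsQF := by
  induction l with
  | nil => exact BoundedFormula.IsQF.top
  | cons a t ih =>
    exact (h a List.mem_cons_self).inf (ih fun φ hφ => h φ (List.mem_cons_of_mem _ hφ))

lemma listDisj_isQF {α : Type} (l : List (L.Formula α)) (h : ∀ φ ∈ l, φ.IsQF) :
    (listDisj l).IsQF := by
  induction l with
  | nil => exact BoundedFormula.isQF_bot
  | cons a t ih =>
    exact (h a List.mem_cons_self).sup (ih fun φ hφ => h φ (List.mem_cons_of_mem _ hφ))

lemma listConj_realize {α : Type} {M : Type u} [L.Structure M] (l : List (L.Formula α))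
    (v : α → M) : (listConj l).Realize v ↔ ∀ φ ∈ l, φ.Realize v := by
  induction l with
  | nil => simp [listConj, Formula.realize_top]
  | cons a t ih =>
    simp only [listConj, List.foldr_cons] at *
    rw [Formula.realize_inf, ih]
    simp
  
lemma listDisj_realize {α : Type} {M : Type u} [L.Structure M] (l : List (L.Formula α))
    (v : α → M) : (listDisj l).Realize v ↔ ∃ φ ∈ l, φ.Realize v := by
  induction l with
  | nil => simp [listDisj, Formula.realize_bot]
  | cons a t ih =>
    simp only [listDisj, List.foldr_cons] at *
    rw [Formula.realize_sup, ih]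
    simp

lemma realize_pi {ι : Type u} {M : ι → Type u} [∀ i, L.Structure (M i)] {β : Type*}
    (t : L.Term β) (v : β → ∀ i, M i) (i : ι) :
    t.realize v i = t.realize (fun x => v x i) := by
  induction t with
  | var => rfl
  | func f ts ih =>
    show funMap f (fun j => (ts j).realize v) i = _
    show funMap f (fun j => ((ts j).realize v) i) = _
    exact congrArg (funMap f) (funext fun j => ih j)

lemma term_mem_closure {M : Type u} [L.Structure M] {s : Set M} {β : Type*}
    (t : L.Term β) (v : β → M) (hv : ∀ x, v x ∈ Substructure.closure L s) :
    t.realize v ∈ Substructure.closure L s := by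
  induction t with
  | var x => exact hv x
  | func f ts ih => exact Substructure.fun_mem _ f _ (fun i => ih i)

lemma exists_term_realize_eq {M : Type u} [L.Structure M] {n : ℕ} {a : Fin n → M}
    (ha : Substructure.closure L (Set.range a) = ⊤) (x : M) :
    ∃ t : L.Term (Fin n), t.realize a = x := by
  have hx : x ∈ Substructure.closure L (Set.range a) := ha ▸ Substructure.mem_top x
  rw [Substructure.mem_closure_iff_exists_term] at hx
  obtain ⟨t, ht⟩ := hx
  refine ⟨t.relabel (fun y => y.2.choose), ?_⟩
  rw [Term.realize_relabel]
  rw [← ht]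
  congr 1
  funext y
  exact y.2.choose_spec



lemma exists_embedding_of_iff [L.IsAlgebraic] {M N : Type u} [L.Structure M] [L.Structure N]
    {n : ℕ} (a : Fin n → M) (b : Fin n → N)
    (ha : Substructure.closure L (Set.range a) = ⊤)
    (h : ∀ s t : L.Term (Fin n), s.realize a = t.realize a ↔ s.realize b = t.realize b) :
    ∃ g : M ↪[L] N, ∀ i, g (a i) = b i := by
  have hT : ∀ x : M, ∃ s : L.Term (Fin n), s.realize a = x := fun x =>
    exists_term_realize_eq ha x
  choose T hTs using hT
  have map_fun : ∀ {m : ℕ} (f : L.Functions m) (x : Fin m → M),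
      (T (funMap f x)).realize b = funMap f (fun i => (T (x i)).realize b) := by
    intro m f x
    have h1 : (T (funMap f x)).realize a = (Term.func f (fun i => T (x i))).realize a := by
      rw [hTs]
      show funMap f x = funMap f fun i => (T (x i)).realize a
      exact congrArg (funMap f) (funext fun i => (hTs (x i)).symm)
    have h2 := (h _ _).1 h1
    rw [h2]
    rfl
  let f : M →[L] N :=
    { toFun := fun x => (T x).realize b
      map_fun' := fun {m} f x => map_fun f x
      map_rel' := fun {m} r _ => isEmptyElim r }
  have hinj : Function.Injective f := by
    intro x y hxy
    have : (T x).realize b = (T y).realize b := hxy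
    have := (h (T x) (T y)).2 this
    rw [hTs, hTs] at this
    exact this
  refine ⟨Embedding.ofInjective hinj, fun i => ?_⟩
  have h1 : (T (a i)).realize a = (Term.var i : L.Term (Fin n)).realize a := by
    rw [hTs]
    rfl
  have h2 := (h _ _).1 h1
  show f (a i) = b i
  exact h2

lemma freeAlg_finite (L : FirstOrder.Language.{u, u}) (hc : Nonempty L.Constants)
    (V : Set (Alg L)) (hV : IsVariety V) (hLF : LocallyFinite V) (hne : V.Nonempty) (n : ℕ) :
    Finite (FreeAlg V (Fin n)) := by
  by_contra hinf
  rw [not_finite_iff_infinite] at hinf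
  let f := hinf.natEmbedding
  set s : ℕ → L.Term (Fin n) := fun i => (f i).out with hs
  have key : ∀ p : ℕ × ℕ, ∃ q : Σ A : Alg L, (Fin n → A.carrier),
      q.1 ∈ V ∧ (p.1 ≠ p.2 → (s p.1).realize q.2 ≠ (s p.2).realize q.2) := by
    intro p
    by_cases hp : p.1 = p.2
    · obtain ⟨A, hA⟩ := hne
      exact ⟨⟨A, fun _ => funMap (Classical.choice hc) (fun i => i.elim0)⟩, hA,
        fun hne' => absurd hp hne'⟩
    · have hnr : ¬ (varietyCong V (Fin n)).rel (s p.1) (s p.2) := by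
        intro hrel
        apply hp
        apply f.injective
        have : Quotient.mk ((varietyCong V (Fin n)).setoid) (s p.1) =
            Quotient.mk ((varietyCong V (Fin n)).setoid) (s p.2) := Quotient.sound hrel
        rwa [hs, Quotient.out_eq, Quotient.out_eq] at this
      simp only [varietyCong] at hnr
      push_neg at hnr
      obtain ⟨A, hA, v, hv⟩ := hnr
      exact ⟨⟨A, v⟩, hA, fun _ => hv⟩
  choose G hGV hGne using key
  let Mf : ULift.{u} (ℕ × ℕ) → Type u := fun i => (G i.down).1.carrier
  letI : ∀ i, L.Structure (Mf i) := fun i => (G i.down).1.str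
  have hP : Alg.mk (∀ i, Mf i) ∈ V := hV.2.2 (ULift.{u} (ℕ × ℕ)) Mf (fun i => hGV i.down)
  set w : Fin n → ∀ i, Mf i := fun x i => (G i.down).2 x with hw
  have hdist : ∀ i j : ℕ, i ≠ j → (s i).realize w ≠ (s j).realize w := by
    intro i j hij heq
    have h1 := congrFun heq (ULift.up (i, j))
    rw [realize_pi, realize_pi] at h1
    exact hGne (i, j) hij h1
  set S := Substructure.closure L (Set.range w) with hS
  have hFG : S.FG := Substructure.fg_closure (Set.finite_range w)
  haveI hSfin : Finite ↥S := hLF (Alg.mk (∀ i, Mf i)) hP S hFG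
  have hmem : ∀ m : ℕ, (s m).realize w ∈ S := fun m =>
    term_mem_closure _ _ (fun x => Substructure.subset_closure (Set.mem_range_self x))
  obtain ⟨i, j, hij, hmeq⟩ := Finite.exists_ne_map_eq_of_infinite
    (fun m : ℕ => (⟨(s m).realize w, hmem m⟩ : ↥S))
  exact hdist i j hij (congrArg Subtype.val hmeq)


/-- Proposition 2.6. Every locally finite variety of algebras over an algebraic
first-order language `L` has the conservative model extension property. -/
theorem consModelExt_of_locallyFinite
    (L : FirstOrder.Language.{u, u}) [L.IsAlgebraic] (hc : Nonempty L.Constants)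
    (V : Set (Alg L)) (hV : IsVariety V) (hLF : LocallyFinite V) :
    ConsModelExt V := by

  classical
  intro n pos neg
  by_cases hne : V.Nonempty
  · -- representatives of the free algebra
    haveI hfin : Finite (FreeAlg V (Fin n)) := freeAlg_finite L hc V hV hLF hne n
    obtain ⟨k, ⟨e⟩⟩ := Finite.exists_equiv_fin (FreeAlg V (Fin n))
    set t : Fin k → L.Term (Fin n) := fun i => (e.symm i).out with ht
    have hrep : ∀ s : L.Term (Fin n), ∃ i, (varietyCong V (Fin n)).rel s (t i) := by
      intro s
      have heq : Quotient.mk ((varietyCong V (Fin n)).setoid) s =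
          Quotient.mk ((varietyCong V (Fin n)).setoid)
            (t (e (Quotient.mk ((varietyCong V (Fin n)).setoid) s))) := by
        simp only [ht, Quotient.out_eq, Equiv.symm_apply_apply]
      exact ⟨_, Quotient.exact heq⟩
    -- formula encoding an equality type
    set pl : List (Fin k × Fin k) := (List.finRange k).product (List.finRange k) with hpl
    set δ : (Fin k → Fin k → Bool) → L.Formula (Fin n) := fun η =>
      listConj (pl.map fun p =>
        if η p.1 p.2 then Term.equal (t p.1) (t p.2) else (Term.equal (t p.1) (t p.2)).not) with hδ
    have δQF : ∀ η, (δ η).IsQF := by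
      intro η
      apply listConj_isQF
      intro φ hφ
      obtain ⟨p, _, rfl⟩ := List.mem_map.1 hφ
      by_cases h : η p.1 p.2
      · simp only [h, if_true]
        exact (BoundedFormula.IsAtomic.equal _ _).isQF
      · simp only [h, if_false]
        exact (BoundedFormula.IsAtomic.equal _ _).isQF.not
    have hite : ∀ {M : Type u} (_ : L.Structure M) (b : Bool) (t₁ t₂ : L.Term (Fin n))
        (w : Fin n → M),
        ((if b then Term.equal t₁ t₂ else (Term.equal t₁ t₂).not).Realize w ↔
          (t₁.realize w = t₂.realize w ↔ b = true)) := by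
      intro M _ b t₁ t₂ w
      cases b <;> simp [Formula.realize_not, Formula.realize_equal]
    have δreal : ∀ (η : Fin k → Fin k → Bool) (M : Type u) (_ : L.Structure M) (w : Fin n → M),
        (δ η).Realize w ↔ ∀ i j, ((t i).realize w = (t j).realize w ↔ η i j = true) := by
      intro η M iM w
      rw [hδ, listConj_realize]
      constructor
      · intro h i j
        exact (hite iM _ _ _ _).1 (h _ (List.mem_map.2 ⟨(i, j),
          List.mem_product.2 ⟨List.mem_finRange i, List.mem_finRange j⟩, rfl⟩))
      · intro h φ hφ
        obtain ⟨p, _, rfl⟩ := List.mem_map.1 hφ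
        exact (hite iM _ _ _ _).2 (h p.1 p.2)
    set Good : (Fin k → Fin k → Bool) → Prop := fun η =>
      ∃ B ∈ V, ∃ v : Fin n ⊕ Unit → B.carrier,
        ConjHolds pos v ∧ NegConjHolds neg v ∧ (δ η).Realize (v ∘ Sum.inl) with hGood
    refine ⟨listDisj (((Finset.univ.filter Good).toList).map δ), ?_, ?_, ?_⟩
    · apply listDisj_isQF
      intro φ hφ
      obtain ⟨η, _, rfl⟩ := List.mem_map.1 hφ
      exact δQF η
    · -- part (i)
      intro A hA v hpos hneg
      set η : Fin k → Fin k → Bool := fun i j =>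
        decide ((t i).realize (v ∘ Sum.inl) = (t j).realize (v ∘ Sum.inl)) with hη
      have hδv : (δ η).Realize (v ∘ Sum.inl) := by
        rw [δreal η A.carrier A.str (v ∘ Sum.inl)]
        intro i j
        rw [hη]
        simp
      rw [listDisj_realize]
      refine ⟨δ η, List.mem_map.2 ⟨η, Finset.mem_toList.2 (Finset.mem_filter.2
        ⟨Finset.mem_univ _, ⟨A, hA, v, hpos, hneg, hδv⟩⟩), rfl⟩, hδv⟩
    · -- part (ii)
      intro A hA a hgen hχ _
      rw [listDisj_realize] at hχ
      obtain ⟨φ, hφmem, hφreal⟩ := hχ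
      obtain ⟨η, hηmem, rfl⟩ := List.mem_map.1 hφmem
      obtain ⟨B, hB, v, hpos, hneg, hδv⟩ := (Finset.mem_filter.1 (Finset.mem_toList.1 hηmem)).2
      -- transfer of term equalities
      have hδa := (δreal η A.carrier A.str a).1 hφreal
      have hδb := (δreal η B.carrier B.str (v ∘ Sum.inl)).1 hδv
      have transfer : ∀ s s' : L.Term (Fin n),
          s.realize a = s'.realize a ↔ s.realize (v ∘ Sum.inl) = s'.realize (v ∘ Sum.inl) := by
        intro s s'
        obtain ⟨i, hi⟩ := hrep s
        obtain ⟨j, hj⟩ := hrep s'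
        rw [hi A hA a, hj A hA a, hi B hB (v ∘ Sum.inl), hj B hB (v ∘ Sum.inl),
          hδa i j, hδb i j]
      obtain ⟨g, hg⟩ := exists_embedding_of_iff a (v ∘ Sum.inl) hgen transfer
      refine ⟨B, hB, g, v (Sum.inr ()), ?_⟩
      have hve : Sum.elim (⇑g ∘ a) (fun _ => v (Sum.inr ())) = v := by
        funext x
        cases x with
        | inl i => exact hg i
        | inr u => cases u; rfl
      rw [hve]
      exact ⟨hpos, hneg⟩
  · -- V is empty
    refine ⟨⊥, BoundedFormula.isQF_bot, ?_, ?_⟩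
    · intro A hA
      exact absurd ⟨A, hA⟩ hne
    · intro A hA
      exact absurd ⟨A, hA⟩ hne

end Paper
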